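/- Let φ be a 3CNF formula with n ≥ 4 variables and ε = 1/(2n³). In every ε-Nash equilibrium (x, y) of the game G(φ), each player's expected payoff is at least n − 1 − ε: U₁(x,y) ≥ n − 1 − ε and U₂(x,y) ≥ n − 1 − ε. -/

import Mathlib

open Finset

/-- The probability simplex over a finite strategy set `S`. -/
def simplex (S : Type*) [Fintype S] : Set (S → ℝ) :=
  {x | (∀ i, 0 ≤ x i) ∧ ∑ i, x i = 1}

/-- Expected payoff `Σᵢⱼ xᵢ yⱼ A i j`. -/
def payoff {S : Type*} [Fintype S] (A : S → S → ℝ) (x y : S → ℝ) : ℝ :=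
  ∑ i, ∑ j, x i * y j * A i j

/-- The point mass at pure strategy `s`. -/
def pureStrat {S : Type*} [DecidableEq S] (s : S) : S → ℝ :=
  fun i => if i = s then 1 else 0

/-- Support of a mixed strategy. -/
def supp {S : Type*} (x : S → ℝ) : Set S := {i | 0 < x i}

/-- L1 distance between mixed strategies. -/
def dist1 {S : Type*} [Fintype S] (x y : S → ℝ) : ℝ := ∑ i, |x i - y i|

/-- `(x, y)` is an ε-Nash equilibrium of the bi-matrix game `(R, C)`. -/
def IsEpsNash {S : Type*} [Fintype S] [DecidableEq S]
    (R C : S → S → ℝ) (x y : S → ℝ) (ε : ℝ) : Prop :=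
  x ∈ simplex S ∧ y ∈ simplex S ∧
  (∀ s : S, payoff R (pureStrat s) y ≤ payoff R x y + ε) ∧
  (∀ s : S, payoff C x (pureStrat s) ≤ payoff C x y + ε)

/-- A literal over `n` variables: a variable together with a sign
(`true` = the positive literal, `false` = the negated literal). -/
abbrev Lit (n : ℕ) := Fin n × Bool

/-- Negation of a literal. -/
def negLit {n : ℕ} (l : Lit n) : Lit n := (l.1, !l.2)

/-- A 3CNF formula with `n` variables and `m` clauses; each clause is a set of
exactly 3 literals. -/
structure CNF3 (n m : ℕ) where
  clause : Fin m → Finset (Lit n)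
  card3 : ∀ c, (clause c).card = 3

/-- An assignment `a` satisfies a clause if some literal of the clause is true under `a`. -/
def SatAssign {n m : ℕ} (φ : CNF3 n m) (a : Fin n → Bool) : Prop :=
  ∀ c, ∃ l ∈ φ.clause c, a l.1 = l.2

/-- Satisfiability of a 3CNF formula. -/
def CNF3.Satisfiable {n m : ℕ} (φ : CNF3 n m) : Prop :=
  ∃ a : Fin n → Bool, SatAssign φ a

/-- Strategy set of the game `G(φ)`: two copies `L₁`, `L₂` of the literals,
then the variables, the clauses, and the special strategy `f`. -/
abbrev GStrat (n m : ℕ) := Lit n ⊕ (Lit n ⊕ (Fin n ⊕ (Fin m ⊕ Unit)))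

/-- The special strategy `f` of the game `G(φ)`. -/
def fStrat (n m : ℕ) : GStrat n m := Sum.inr (Sum.inr (Sum.inr (Sum.inr ())))

/-- The row player's payoff in the game `G(φ)`. -/
def gU1 {n m : ℕ} (φ : CNF3 n m) : GStrat n m → GStrat n m → ℝ
  | Sum.inr (Sum.inl _), _ => -2 * (n : ℝ)
  | Sum.inr (Sum.inr (Sum.inr (Sum.inr _))),
      Sum.inr (Sum.inr (Sum.inr (Sum.inr _))) => 2 * (n : ℝ)
  | Sum.inr (Sum.inr (Sum.inr (Sum.inr _))), _ => (n : ℝ) - 1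
  | _, Sum.inr (Sum.inr (Sum.inr (Sum.inr _))) => 0
  | _, Sum.inl _ => 0
  | Sum.inl a, Sum.inr (Sum.inl b) =>
      if a = negLit b then (n : ℝ) - 4 else (n : ℝ) - 1
  | Sum.inl _, _ => (n : ℝ) - 4
  | Sum.inr (Sum.inr (Sum.inl w)), Sum.inr (Sum.inl l) =>
      if l.1 = w then 0 else (n : ℝ)
  | Sum.inr (Sum.inr (Sum.inl _)), _ => (n : ℝ) - 4
  | Sum.inr (Sum.inr (Sum.inr (Sum.inl c))), Sum.inr (Sum.inl l) =>
      if l ∈ φ.clause c then 0 else (n : ℝ)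
  | Sum.inr (Sum.inr (Sum.inr (Sum.inl _))), _ => (n : ℝ) - 4

/-- The column player's payoff in the game `G(φ)`. -/
def gU2 {n m : ℕ} (φ : CNF3 n m) : GStrat n m → GStrat n m → ℝ
  | _, Sum.inl _ => -2 * (n : ℝ)
  | Sum.inr (Sum.inr (Sum.inr (Sum.inr _))),
      Sum.inr (Sum.inr (Sum.inr (Sum.inr _))) => 2 * (n : ℝ)
  | _, Sum.inr (Sum.inr (Sum.inr (Sum.inr _))) => (n : ℝ) - 1
  | Sum.inr (Sum.inr (Sum.inr (Sum.inr _))), _ => 0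
  | Sum.inr (Sum.inl _), _ => 0
  | Sum.inl a, Sum.inr (Sum.inl b) =>
      if a = negLit b then (n : ℝ) - 4 else (n : ℝ) - 1
  | _, Sum.inr (Sum.inl _) => (n : ℝ) - 4
  | Sum.inl a, Sum.inr (Sum.inr (Sum.inl w)) =>
      if a.1 = w then 0 else (n : ℝ)
  | _, Sum.inr (Sum.inr (Sum.inl _)) => (n : ℝ) - 4
  | Sum.inl a, Sum.inr (Sum.inr (Sum.inr (Sum.inl c))) =>
      if a ∈ φ.clause c then 0 else (n : ℝ)
  | _, Sum.inr (Sum.inr (Sum.inr (Sum.inl _))) => (n : ℝ) - 4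

/-! The strategy `f` is safe: whatever the opponent plays, it pays `n - 1` (or `2n` against `f`).
In an ε-Nash equilibrium no deviation gains more than ε, so deviating to `f` shows that each
equilibrium payoff is at least `n - 1 - ε`. -/

section Games

variable {S : Type*} [Fintype S]

lemma le_sum_mul_of_mem_simplex {y : S → ℝ} (hy : y ∈ simplex S) {a : S → ℝ} {c : ℝ}
    (ha : ∀ j, c ≤ a j) : c ≤ ∑ j, y j * a j :=
  calc c = ∑ j, y j * c := by rw [← sum_mul, hy.2, one_mul]
    _ ≤ ∑ j, y j * a j := sum_le_sum fun j _ => mul_le_mul_of_nonneg_left (ha j) (hy.1 j)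

variable [DecidableEq S]

lemma payoff_pureStrat_left (A : S → S → ℝ) (s : S) (y : S → ℝ) :
    payoff A (pureStrat s) y = ∑ j, y j * A s j := by
  simp [payoff, pureStrat, ite_mul]

lemma payoff_pureStrat_right (A : S → S → ℝ) (x : S → ℝ) (s : S) :
    payoff A x (pureStrat s) = ∑ i, x i * A i s := by
  simp [payoff, pureStrat, mul_ite]

lemma IsEpsNash.sub_le_payoff_left {R C : S → S → ℝ} {x y : S → ℝ} {ε c : ℝ}
    (h : IsEpsNash R C x y ε) (s : S) (hs : ∀ j, c ≤ R s j) :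
    c - ε ≤ payoff R x y := by
  have hdev := h.2.2.1 s
  rw [payoff_pureStrat_left] at hdev
  linarith [le_sum_mul_of_mem_simplex h.2.1 hs]

lemma IsEpsNash.sub_le_payoff_right {R C : S → S → ℝ} {x y : S → ℝ} {ε c : ℝ}
    (h : IsEpsNash R C x y ε) (s : S) (hs : ∀ i, c ≤ C i s) :
    c - ε ≤ payoff C x y := by
  have hdev := h.2.2.2 s
  rw [payoff_pureStrat_right] at hdev
  linarith [le_sum_mul_of_mem_simplex h.1 hs]

end Games

lemma sub_one_le_gU1_fStrat {n m : ℕ} (φ : CNF3 n m) (j : GStrat n m) :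
    (n : ℝ) - 1 ≤ gU1 φ (fStrat n m) j := by
  rcases j with _ | _ | _ | _ | _ <;> simp [gU1, fStrat]
  linarith [n.cast_nonneg (α := ℝ)]

lemma sub_one_le_gU2_fStrat {n m : ℕ} (φ : CNF3 n m) (i : GStrat n m) :
    (n : ℝ) - 1 ≤ gU2 φ i (fStrat n m) := by
  rcases i with _ | _ | _ | _ | _ <;> simp [gU2, fStrat]
  linarith [n.cast_nonneg (α := ℝ)]

theorem stmt19_general {n m : ℕ} (φ : CNF3 n m)
    (ε : ℝ) :
    ∀ x y : GStrat n m → ℝ, IsEpsNash (gU1 φ) (gU2 φ) x y ε →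
      (n : ℝ) - 1 - ε ≤ payoff (gU1 φ) x y ∧
      (n : ℝ) - 1 - ε ≤ payoff (gU2 φ) x y :=
  fun _ _ h => ⟨h.sub_le_payoff_left _ (sub_one_le_gU1_fStrat φ),
    h.sub_le_payoff_right _ (sub_one_le_gU2_fStrat φ)⟩

theorem stmt19 {n m : ℕ} (hn : 4 ≤ n) (φ : CNF3 n m)
    (ε : ℝ) (hε : ε = 1 / (2 * (n : ℝ) ^ 3)) :
    ∀ x y : GStrat n m → ℝ, IsEpsNash (gU1 φ) (gU2 φ) x y ε →
      (n : ℝ) - 1 - ε ≤ payoff (gU1 φ) x y ∧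
      (n : ℝ) - 1 - ε ≤ payoff (gU2 φ) x y :=
  stmt19_general φ ε
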